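/- Let P be a finite lattice and let J_P ⊆ P be the sublattice consisting of all joins of atoms of P (including the empty join, which equals 0̂). If the top element 1̂ of P does not lie in J_P, then the based space Δ̌̂(P) is contractible. If 1̂ ∈ J_P, then Δ̌̂(P) is homotopy equivalent to Δ̌̂(J_P). -/

import Mathlib

open Finset

attribute [local instance] Classical.propDecidable

/-- Geometric order complex `Δ(P)` of a finite poset. -/
def OC (P : Type) [PartialOrder P] [Fintype P] : Type :=
  {f : P → ℝ // (∀ x, 0 ≤ f x) ∧ (∑ x, f x) = 1 ∧ IsChain (· ≤ ·) {x | f x ≠ 0}}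

instance (P : Type) [PartialOrder P] [Fintype P] : TopologicalSpace (OC P) :=
  inferInstanceAs (TopologicalSpace {f : P → ℝ // _})

/-- Relation collapsing `A ⊆ X` to a freely added basepoint; models `X/A`. -/
def pcollapseRel (X : Type) (A : Set X) : (X ⊕ Unit) → (X ⊕ Unit) → Prop :=
  fun a b => ∃ x ∈ A, a = Sum.inl x ∧ b = Sum.inr ()

/-- The quotient space `X/A`. -/
def PCollapse (X : Type) [TopologicalSpace X] (A : Set X) : Type :=
  Quot (pcollapseRel X A)

instance (X : Type) [TopologicalSpace X] (A : Set X) : TopologicalSpace (PCollapse X A) :=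
  inferInstanceAs (TopologicalSpace (Quot _))

/-- `Δ̌̂(P)`: collapse in `Δ(P)` all simplices not containing both `b` and `t`. -/
def Dhat (P : Type) [PartialOrder P] [Fintype P] (b t : P) : Type :=
  PCollapse (OC P) {f : OC P | f.1 b = 0 ∨ f.1 t = 0}

instance (P : Type) [PartialOrder P] [Fintype P] (b t : P) :
    TopologicalSpace (Dhat P b t) :=
  inferInstanceAs (TopologicalSpace (PCollapse _ _))

/-- The sublattice of all joins of atoms of a finite lattice (including the empty
join, which equals `⊥`). -/
def joinsOfAtoms (P : Type) [Lattice P] [Fintype P] [BoundedOrder P] : Set P :=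
  {x | ∃ s : Finset P, (∀ a ∈ s, IsAtom a) ∧ x = s.sup id}

/-!
The map `x ↦ ⋁ {a atom | a ≤ x}` is a monotone retraction of `P` onto `J_P` lying below
the identity; only `⊥` goes to `⊥`, and at most `⊤` goes to `⊤`. Comparable monotone maps
induce homotopic maps of order complexes through the prism homotopy, and here that homotopy
keeps every chain missing `⊥` or `⊤` inside the collapsed subcomplex. Hence the retraction
induces a homotopy equivalence `Δ̌̂(P) ≃ Δ̌̂(J_P)` when `⊤ ∈ J_P`; when `⊤ ∉ J_P` it sends
every chain to one missing `⊤`, so the identity of `Δ̌̂(P)` is homotopic to a constant map.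
-/

section Weights

variable {P Q : Type} [Fintype P]

noncomputable def fiberSum (φ : P → Q) (f : P → ℝ) (q : Q) : ℝ := ∑ x with φ x = q, f x

variable {φ : P → Q} {f : P → ℝ}

lemma sum_fiberSum [Fintype Q] (φ : P → Q) (f : P → ℝ) :
    ∑ q, fiberSum φ f q = ∑ x, f x :=
  sum_fiberwise univ φ f

lemma fiberSum_nonneg (hf : ∀ x, 0 ≤ f x) (q : Q) : 0 ≤ fiberSum φ f q :=
  sum_nonneg fun x _ => hf x

lemma fiberSum_eq_zero {q : Q} (h : ∀ x, φ x = q → f x = 0) : fiberSum φ f q = 0 :=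
  sum_eq_zero fun x hx => h x (mem_filter.1 hx).2

lemma support_fiberSum_subset : Function.support (fiberSum φ f) ⊆ φ '' Function.support f := by
  intro q hq
  by_contra h
  exact hq (fiberSum_eq_zero fun x hx => by_contra fun hfx => h ⟨x, hfx, hx⟩)

@[simp]
lemma fiberSum_zero : fiberSum φ (0 : P → ℝ) = 0 :=
  funext fun _ => sum_const_zero

@[simp]
lemma fiberSum_id : fiberSum id f = f :=
  funext fun q => by simp [fiberSum, sum_filter]

lemma fiberSum_comp [Fintype Q] {R : Type} (φ : Q → R) (ψ : P → Q) :
    fiberSum (φ ∘ ψ) f = fiberSum φ (fiberSum ψ f) := by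
  funext r
  rw [fiberSum, fiberSum, ← sum_fiberwise_of_maps_to (g := ψ) (t := {q | φ q = r}) (by simp)]
  refine sum_congr rfl fun q hq => ?_
  rw [filter_filter]
  congr 1
  ext x
  simp only [mem_filter, mem_univ, true_and, Function.comp_apply] at hq ⊢
  exact ⟨And.right, fun h => ⟨h ▸ hq, h⟩⟩

lemma continuous_fiberSum {X : Type} [TopologicalSpace X] {g : X → P → ℝ}
    (hg : ∀ x, Continuous fun a => g a x) (q : Q) : Continuous fun a => fiberSum φ (g a) q :=
  continuous_finsetSum _ fun x _ => hg x

end Weights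

section MovedMass

variable {P : Type} [PartialOrder P] [Fintype P] {f : P → ℝ} {t : ℝ} {x y : P}

/-- When `f` is supported on a chain, the mass strictly above `x`. -/
noncomputable def massAbove (f : P → ℝ) (x : P) : ℝ := ∑ y with ¬ y ≤ x, f y

/-- The part of the mass at `x` that lies in the topmost portion of total mass `t`. -/
noncomputable def movedMass (t : ℝ) (f : P → ℝ) (x : P) : ℝ :=
  min (f x) (max 0 (t - massAbove f x))

lemma massAbove_nonneg (hf : ∀ x, 0 ≤ f x) (x : P) : 0 ≤ massAbove f x :=
  sum_nonneg fun y _ => hf y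

lemma massAbove_add_self (f : P → ℝ) (x : P) :
    massAbove f x + f x = ∑ y ∈ insert x ({y | ¬ y ≤ x} : Finset P), f y := by
  rw [sum_insert (by simp), add_comm, massAbove]

lemma massAbove_add_self_le_sum (hf : ∀ x, 0 ≤ f x) (x : P) :
    massAbove f x + f x ≤ ∑ y, f y := by
  rw [massAbove_add_self]
  exact sum_le_univ_sum_of_nonneg hf

lemma massAbove_add_self_le_massAbove (hf : ∀ x, 0 ≤ f x) (hyx : y < x) :
    massAbove f x + f x ≤ massAbove f y := by
  rw [massAbove_add_self]
  refine sum_le_sum_of_subset_of_nonneg (fun z hz => ?_) fun z _ _ => hf z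
  simp only [mem_insert, mem_filter, mem_univ, true_and] at hz ⊢
  rcases hz with rfl | hz
  · exact hyx.not_ge
  · exact fun hzy => hz (hzy.trans hyx.le)

lemma movedMass_nonneg (hf : ∀ x, 0 ≤ f x) (t : ℝ) (x : P) : 0 ≤ movedMass t f x :=
  le_min (hf x) (le_max_left _ _)

lemma movedMass_le (t : ℝ) (x : P) : movedMass t f x ≤ f x :=
  min_le_left _ _

lemma movedMass_zero (hf : ∀ x, 0 ≤ f x) : movedMass 0 f = 0 := by
  funext x
  rw [movedMass, max_eq_left (by linarith [massAbove_nonneg hf x]), min_eq_right (hf x)]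
  rfl

lemma movedMass_one (hf : ∀ x, 0 ≤ f x) (hsum : ∑ x, f x = 1) : movedMass 1 f = f := by
  funext x
  have := massAbove_add_self_le_sum hf x
  rw [movedMass, max_eq_right (by linarith [hf x]), min_eq_left (by linarith)]

lemma movedMass_eq_zero_of_eq_zero (hf : ∀ x, 0 ≤ f x) (t : ℝ) (hx : f x = 0) :
    movedMass t f x = 0 :=
  le_antisymm (hx ▸ movedMass_le t x) (movedMass_nonneg hf t x)

lemma support_movedMass_subset (hf : ∀ x, 0 ≤ f x) (t : ℝ) :
    Function.support (movedMass t f) ⊆ Function.support f :=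
  fun _ hx h => hx (movedMass_eq_zero_of_eq_zero hf t h)

lemma support_sub_movedMass_subset (hf : ∀ x, 0 ≤ f x) (t : ℝ) :
    Function.support (f - movedMass t f) ⊆ Function.support f :=
  fun x hx h => hx (by simp [h, movedMass_eq_zero_of_eq_zero hf t h])

lemma massAbove_lt_of_movedMass_ne_zero (hf : ∀ x, 0 ≤ f x) (h : movedMass t f x ≠ 0) :
    massAbove f x < t := by
  by_contra! hle
  exact h (by rw [movedMass, max_eq_left (by linarith), min_eq_right (hf x)])

lemma lt_massAbove_add_self_of_movedMass_ne (h : movedMass t f x ≠ f x) :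
    t < massAbove f x + f x := by
  have hlt : max 0 (t - massAbove f x) < f x := by
    by_contra! hle
    exact h (min_eq_left hle)
  linarith [le_max_right 0 (t - massAbove f x)]

lemma le_of_mem_support_sub_movedMass (hf : ∀ x, 0 ≤ f x)
    (hchain : IsChain (· ≤ ·) (Function.support f))
    (hx : x ∈ Function.support (f - movedMass t f))
    (hy : y ∈ Function.support (movedMass t f)) : x ≤ y := by
  rcases hchain.total (support_sub_movedMass_subset hf t hx) (support_movedMass_subset hf t hy)
    with hxy | hyx
  · exact hxy
  rcases hyx.eq_or_lt with rfl | hyx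
  · exact le_rfl
  have h1 := lt_massAbove_add_self_of_movedMass_ne (sub_ne_zero.1 hx).symm
  have h2 := massAbove_lt_of_movedMass_ne_zero hf hy
  linarith [massAbove_add_self_le_massAbove hf hyx]

lemma continuous_movedMass (x : P) : Continuous fun p : ℝ × (P → ℝ) => movedMass p.1 p.2 x :=
  ((continuous_apply x).comp continuous_snd).min <| continuous_const.max <|
    continuous_fst.sub <|
      continuous_finsetSum _ fun y _ => (continuous_apply y).comp continuous_snd

end MovedMass

section PrismWeights

variable {P Q : Type} [PartialOrder P] [Fintype P] [PartialOrder Q]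

lemma isChain_support_fiberSum_add_fiberSum {φ ψ : P →o Q} (hφψ : φ ≤ ψ) {f : P → ℝ}
    (hf : ∀ x, 0 ≤ f x) (hchain : IsChain (· ≤ ·) (Function.support f)) (t : ℝ) :
    IsChain (· ≤ ·) (Function.support
      (fiberSum φ (f - movedMass t f) + fiberSum ψ (movedMass t f))) := by
  refine IsChain.mono ((Function.support_add _ _).trans
    (Set.union_subset_union support_fiberSum_subset support_fiberSum_subset)) ?_
  refine isChain_union.2 ⟨?_, ?_, ?_⟩
  · exact (hchain.mono (support_sub_movedMass_subset hf t)).image_of_map_rel _ _ φ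
      fun _ _ h => φ.mono h
  · exact (hchain.mono (support_movedMass_subset hf t)).image_of_map_rel _ _ ψ
      fun _ _ h => ψ.mono h
  · rintro _ ⟨x, hx, rfl⟩ _ ⟨y, hy, rfl⟩ -
    exact Or.inl ((φ.mono (le_of_mem_support_sub_movedMass hf hchain hx hy)).trans (hφψ y))

end PrismWeights

namespace OC

variable {P Q R : Type} [PartialOrder P] [Fintype P] [PartialOrder Q] [Fintype Q]
  [PartialOrder R] [Fintype R]

lemma continuous_apply (x : P) : Continuous fun f : OC P => f.1 x :=
  (_root_.continuous_apply x).comp continuous_subtype_val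

noncomputable def map (φ : P →o Q) : C(OC P, OC Q) where
  toFun f := ⟨fiberSum φ f.1, fiberSum_nonneg f.2.1, (sum_fiberSum φ f.1).trans f.2.2.1,
    (f.2.2.2.image_of_map_rel _ _ φ fun _ _ h => φ.mono h).mono support_fiberSum_subset⟩
  continuous_toFun :=
    (continuous_pi (continuous_fiberSum continuous_apply)).subtype_mk _

lemma map_apply_val (φ : P →o Q) (f : OC P) : (map φ f).1 = fiberSum φ f.1 := rfl

@[simp]
lemma map_id : map (OrderHom.id : P →o P) = ContinuousMap.id (OC P) :=
  ContinuousMap.ext fun _ => Subtype.ext fiberSum_id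

lemma map_comp (φ : Q →o R) (ψ : P →o Q) : map (φ.comp ψ) = (map φ).comp (map ψ) :=
  ContinuousMap.ext fun _ => Subtype.ext (fiberSum_comp φ ψ)

lemma map_apply_eq_zero {φ : P →o Q} {f : OC P} {q : Q} (h : ∀ x, φ x = q → f.1 x = 0) :
    (map φ f).1 q = 0 :=
  fiberSum_eq_zero h

/-- At time `t` the topmost mass `t` of a chain has been transported along `ψ`, the rest along
`φ`; this stays a chain because the untransported mass lies below the transported one. -/
noncomputable def prism {φ ψ : P →o Q} (hφψ : φ ≤ ψ) : (map φ).Homotopy (map ψ) where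
  toFun p := ⟨fiberSum φ (p.2.1 - movedMass p.1 p.2.1) + fiberSum ψ (movedMass p.1 p.2.1),
    fun q => add_nonneg
      (fiberSum_nonneg (fun x => sub_nonneg.2 (movedMass_le _ x)) q)
      (fiberSum_nonneg (movedMass_nonneg p.2.2.1 _) q),
    by
      simp only [Pi.add_apply, sum_add_distrib, sum_fiberSum, Pi.sub_apply]
      rw [← sum_add_distrib]
      simpa using p.2.2.2.1,
    isChain_support_fiberSum_add_fiberSum hφψ p.2.2.1 p.2.2.2.2 p.1⟩
  continuous_toFun := by
    have hmoved (x : P) : Continuous fun p : unitInterval × OC P => movedMass p.1 p.2.1 x :=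
      (continuous_movedMass x).comp
        ((continuous_subtype_val.comp continuous_fst).prodMk
          (continuous_subtype_val.comp continuous_snd))
    refine (continuous_pi fun q => ?_).subtype_mk _
    exact (continuous_fiberSum (fun x => ((continuous_apply x).comp continuous_snd).sub
      (hmoved x)) q).add (continuous_fiberSum hmoved q)
  map_zero_left f := Subtype.ext <| by
    simp [movedMass_zero f.2.1, map_apply_val]
  map_one_left f := Subtype.ext <| by
    simp [movedMass_one f.2.1 f.2.2.1, map_apply_val]

lemma prism_apply_eq_zero {φ ψ : P →o Q} (hφψ : φ ≤ ψ) {f : OC P} {q : Q}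
    (h : ∀ x, φ x = q ∨ ψ x = q → f.1 x = 0) (t : unitInterval) :
    (prism hφψ (t, f)).1 q = 0 := by
  have h0 x := movedMass_eq_zero_of_eq_zero f.2.1 t (f := f.1) (x := x)
  change fiberSum φ _ q + fiberSum ψ _ q = 0
  rw [fiberSum_eq_zero fun x hx => by simp [h x (.inl hx), h0 x (h x (.inl hx))],
    fiberSum_eq_zero fun x hx => h0 x (h x (.inr hx)), add_zero]

end OC

namespace PCollapse

variable {X Y Z : Type} [TopologicalSpace X] [TopologicalSpace Y] [TopologicalSpace Z]
  {A : Set X} {B : Set Y} {C : Set Z}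

def mk (A : Set X) (x : X) : PCollapse X A := Quot.mk _ (Sum.inl x)

def pt : PCollapse X A := Quot.mk _ (Sum.inr ())

lemma continuous_mk : Continuous (mk A) :=
  continuous_quot_mk.comp continuous_inl

lemma mk_eq_pt {x : X} (hx : x ∈ A) : mk A x = pt :=
  Quot.sound ⟨x, hx, rfl, rfl⟩

@[elab_as_elim]
lemma ind {motive : PCollapse X A → Prop} (mk : ∀ x, motive (mk A x)) (pt : motive pt)
    (d : PCollapse X A) : motive d :=
  Quot.ind (Sum.rec mk fun _ => pt) d

def lift (F : C(X, Z)) (z : Z) (hF : ∀ x ∈ A, F x = z) : C(PCollapse X A, Z) where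
  toFun := Quot.lift (Sum.elim F fun _ => z) (by rintro _ _ ⟨x, hx, rfl, rfl⟩; exact hF x hx)
  continuous_toFun := continuous_quot_lift _ (F.continuous.sumElim continuous_const)

def map (F : C(X, Y)) (hF : Set.MapsTo F A B) : C(PCollapse X A, PCollapse Y B) :=
  lift ((⟨mk B, continuous_mk⟩ : C(Y, PCollapse Y B)).comp F) pt fun _ hx => mk_eq_pt (hF hx)

lemma map_id : map (ContinuousMap.id X) (Set.mapsTo_id A) = ContinuousMap.id _ :=
  ContinuousMap.ext (ind (fun _ => rfl) rfl)

lemma map_comp (F : C(Y, Z)) (G : C(X, Y)) (hF : Set.MapsTo F B C) (hG : Set.MapsTo G A B) :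
    (map F hF).comp (map G hG) = map (F.comp G) (hF.comp hG) :=
  ContinuousMap.ext (ind (fun _ => rfl) rfl)

lemma map_eq_const (F : C(X, Y)) (hF : ∀ x, F x ∈ B) :
    map (A := A) F (fun x _ => hF x) = ContinuousMap.const _ (pt : PCollapse Y B) :=
  ContinuousMap.ext (ind (fun x => mk_eq_pt (hF x)) rfl)

/-- The homotopy is lifted through the quotient in curried form, which is legitimate because
the unit interval is locally compact. -/
theorem homotopic_map {F G : C(X, Y)} (H : F.Homotopy G)
    (hH : ∀ t, Set.MapsTo (fun x => H (t, x)) A B) (hF : Set.MapsTo F A B)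
    (hG : Set.MapsTo G A B) : (map F hF).Homotopic (map G hG) := by
  let K : C(PCollapse X A, C(unitInterval, PCollapse Y B)) :=
    lift ((⟨mk B, continuous_mk⟩ : C(Y, PCollapse Y B)).comp
      (H.toContinuousMap.comp ⟨Prod.swap, continuous_swap⟩)).curry
      (ContinuousMap.const _ pt) fun x hx => ContinuousMap.ext fun t => mk_eq_pt (hH t hx)
  exact ⟨{
    toContinuousMap := K.uncurry.comp ⟨Prod.swap, continuous_swap⟩
    map_zero_left := ind (fun x => congrArg (mk B) (H.apply_zero x)) rfl
    map_one_left := ind (fun x => congrArg (mk B) (H.apply_one x)) rfl }⟩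

end PCollapse

namespace Dhat

variable {P Q R : Type} [PartialOrder P] [Fintype P] [PartialOrder Q] [Fintype Q]
  [PartialOrder R] [Fintype R] {b t : P} {b' t' : Q} {b'' t'' : R}

noncomputable def map (φ : P →o Q) (hb : ∀ x, φ x = b' → x = b)
    (ht : ∀ x, φ x = t' → x = t) : C(Dhat P b t, Dhat Q b' t') :=
  PCollapse.map (OC.map φ) fun _ hf => hf.imp
    (fun h => OC.map_apply_eq_zero fun x hx => hb x hx ▸ h)
    (fun h => OC.map_apply_eq_zero fun x hx => ht x hx ▸ h)

lemma map_id : map (OrderHom.id : P →o P) (b' := b) (t' := t) (fun _ => id) (fun _ => id) =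
    ContinuousMap.id _ := by
  simp only [map, OC.map_id]
  exact PCollapse.map_id

lemma map_comp (φ : Q →o R) (ψ : P →o Q) (hφb : ∀ x, φ x = b'' → x = b')
    (hφt : ∀ x, φ x = t'' → x = t') (hψb : ∀ x, ψ x = b' → x = b)
    (hψt : ∀ x, ψ x = t' → x = t) :
    (map φ hφb hφt).comp (map ψ hψb hψt) =
      map (φ.comp ψ) (fun x hx => hψb x (hφb _ hx)) (fun x hx => hψt x (hφt _ hx)) := by
  simp only [map, OC.map_comp]
  exact PCollapse.map_comp _ _ _ _

theorem homotopic_map {φ ψ : P →o Q} (hφψ : φ ≤ ψ) (hφb : ∀ x, φ x = b' → x = b)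
    (hφt : ∀ x, φ x = t' → x = t) (hψb : ∀ x, ψ x = b' → x = b)
    (hψt : ∀ x, ψ x = t' → x = t) :
    (map φ hφb hφt).Homotopic (map ψ hψb hψt) := by
  refine PCollapse.homotopic_map (OC.prism hφψ) (fun s _ hf => hf.imp ?_ ?_) _ _
  · exact fun h => OC.prism_apply_eq_zero hφψ (fun x hx => hx.elim (hφb x) (hψb x) ▸ h) s
  · exact fun h => OC.prism_apply_eq_zero hφψ (fun x hx => hx.elim (hφt x) (hψt x) ▸ h) s

end Dhat

section AtomJoin

variable {L : Type} [Lattice L] [Fintype L] [BoundedOrder L] {x : L}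

noncomputable def atomJoin : L →o L where
  toFun x := ({a | IsAtom a ∧ a ≤ x} : Finset L).sup id
  monotone' _ _ hxy := sup_mono fun a ha => by
    simp only [mem_filter, mem_univ, true_and] at ha ⊢
    exact ⟨ha.1, ha.2.trans hxy⟩

lemma atomJoin_le (x : L) : atomJoin x ≤ x :=
  Finset.sup_le fun _ ha => (mem_filter.1 ha).2.2

lemma le_atomJoin {a : L} (ha : IsAtom a) (hax : a ≤ x) : a ≤ atomJoin x :=
  le_sup (f := id) (mem_filter.2 ⟨mem_univ a, ha, hax⟩)

lemma atomJoin_mem (x : L) : atomJoin x ∈ joinsOfAtoms L :=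
  ⟨_, fun _ ha => (mem_filter.1 ha).2.1, rfl⟩

lemma atomJoin_of_mem (hx : x ∈ joinsOfAtoms L) : atomJoin x = x := by
  obtain ⟨s, hs, rfl⟩ := hx
  exact (atomJoin_le _).antisymm
    (Finset.sup_le fun a ha => le_atomJoin (hs a ha) (le_sup (f := id) ha))

lemma atomJoin_eq_bot_iff : atomJoin x = ⊥ ↔ x = ⊥ := by
  refine ⟨fun h => ?_, fun h => le_bot_iff.1 (h ▸ atomJoin_le x)⟩
  by_contra hx
  obtain ⟨a, ha, hax⟩ := (eq_bot_or_exists_atom_le x).resolve_left hx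
  exact ha.1 (le_bot_iff.1 (h ▸ le_atomJoin ha hax))

lemma eq_top_of_atomJoin_eq_top (h : atomJoin x = ⊤) : x = ⊤ :=
  top_unique (h ▸ atomJoin_le x)

lemma bot_mem_joinsOfAtoms : (⊥ : L) ∈ joinsOfAtoms L :=
  ⟨∅, by simp, by simp⟩

theorem Dhat.homotopic_map_atomJoin :
    (Dhat.map atomJoin (fun _ => atomJoin_eq_bot_iff.1) (fun _ => eq_top_of_atomJoin_eq_top) :
      C(Dhat L ⊥ ⊤, Dhat L ⊥ ⊤)).Homotopic (ContinuousMap.id _) :=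
  Dhat.map_id (P := L) ▸ Dhat.homotopic_map atomJoin_le _ _ (fun _ => id) (fun _ => id)

theorem Dhat.contractibleSpace_of_top_notMem_joinsOfAtoms (h : (⊤ : L) ∉ joinsOfAtoms L) :
    ContractibleSpace (Dhat L ⊥ ⊤) := by
  have hconst : (Dhat.map atomJoin (fun _ => atomJoin_eq_bot_iff.1)
      (fun _ => eq_top_of_atomJoin_eq_top) : C(Dhat L ⊥ ⊤, Dhat L ⊥ ⊤)) =
      ContinuousMap.const _ PCollapse.pt :=
    PCollapse.map_eq_const (OC.map atomJoin) fun _ => Or.inr <| OC.map_apply_eq_zero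
      fun x (hx : atomJoin x = ⊤) => absurd (hx ▸ atomJoin_mem x) h
  rw [contractible_iff_id_nullhomotopic]
  exact ⟨_, hconst ▸ Dhat.homotopic_map_atomJoin.symm⟩

theorem Dhat.nonempty_homotopyEquiv_joinsOfAtoms (h : (⊤ : L) ∈ joinsOfAtoms L) :
    Nonempty (ContinuousMap.HomotopyEquiv (Dhat L ⊥ ⊤)
      (Dhat (joinsOfAtoms L) ⟨⊥, bot_mem_joinsOfAtoms⟩ ⟨⊤, h⟩)) := by
  let r : L →o joinsOfAtoms L :=
    ⟨fun x => ⟨atomJoin x, atomJoin_mem x⟩, fun _ _ hxy => atomJoin.mono hxy⟩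
  let i : joinsOfAtoms L →o L := OrderHom.Subtype.val _
  have hri : r.comp i = OrderHom.id :=
    OrderHom.ext _ _ <| funext fun x => Subtype.ext (atomJoin_of_mem x.2)
  refine ⟨⟨Dhat.map r (fun _ hx => atomJoin_eq_bot_iff.1 (congrArg Subtype.val hx))
      (fun _ hx => eq_top_of_atomJoin_eq_top (congrArg Subtype.val hx)),
    Dhat.map i (fun _ hx => Subtype.ext hx) (fun _ hx => Subtype.ext hx), ?_, ?_⟩⟩
  · rw [Dhat.map_comp]
    exact Dhat.homotopic_map_atomJoin
  · rw [Dhat.map_comp]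
    simp only [hri, Dhat.map_id]
    exact .refl _

end AtomJoin

/-- Let `P` be a finite lattice and `J_P ⊆ P` the sublattice of all joins of atoms.
If `⊤ ∉ J_P` then `Δ̌̂(P)` is contractible; if `⊤ ∈ J_P` then `Δ̌̂(P)` is homotopy
equivalent to `Δ̌̂(J_P)`. -/
theorem dhat_joins_of_atoms (P : Type) [Lattice P] [Fintype P] [BoundedOrder P] :
    (⊤ ∉ joinsOfAtoms P → ContractibleSpace (Dhat P ⊥ ⊤)) ∧
    (∀ h : ⊤ ∈ joinsOfAtoms P,
      Nonempty (ContinuousMap.HomotopyEquiv (Dhat P ⊥ ⊤)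
        (Dhat {x : P // x ∈ joinsOfAtoms P}
          ⟨⊥, ⟨(∅ : Finset P), by simp, by simp⟩⟩ ⟨⊤, h⟩))) :=
  ⟨Dhat.contractibleSpace_of_top_notMem_joinsOfAtoms,
    Dhat.nonempty_homotopyEquiv_joinsOfAtoms⟩
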